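/- arXiv:2009.02251 — 2 statements merged into one kernel-verified Lean document; each statement's English description precedes it below -/
import Mathlib

section
/- (Eckart–Young, Frobenius norm) For any m×n real matrix A and any m×n matrix M of rank at most k, ‖A − A_k‖_F ≤ ‖A − M‖_F, where A_k is the rank-k truncated SVD of A. -/
/-!
Conjugating by the orthogonal matrices `U` and `V` preserves the Frobenius norm and reduces the
claim to the rectangular diagonal `S` and `B = Uᵀ M V`, of rank at most `k`. If `P` is the
orthogonal projection onto the row space of `B`, then `B P = B`, hence
`‖S - B‖² ≥ ‖(S - B)(1 - P)‖² = ‖S (1 - P)‖² = ‖S‖² - ‖S P‖²`. Now `‖S P‖² = ∑ σⱼ² Pⱼⱼ` with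
`0 ≤ Pⱼⱼ ≤ 1` and `∑ Pⱼⱼ = rank B ≤ k`, so `‖S P‖²` is at most the sum of the `k` largest `σⱼ²`,
which is `‖S‖² - ‖S - Sk‖²`.
-/

open Matrix

noncomputable def frobSq {α β : Type*} [Fintype α] [Fintype β]
    (A : Matrix α β ℝ) : ℝ := ∑ i, ∑ j, (A i j) ^ 2

open Finset

lemma sum_mul_le_sum_of_sum_le_card {ι : Type*} [Fintype ι] [DecidableEq ι] (s : Finset ι)
    {c τ : ι → ℝ} (hc0 : ∀ i, 0 ≤ c i) (hc : ∀ i ∈ s, ∀ j ∉ s, c j ≤ c i)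
    (hτ0 : ∀ i, 0 ≤ τ i) (hτ1 : ∀ i, τ i ≤ 1) (hτ : ∑ i, τ i ≤ #s) :
    ∑ i, c i * τ i ≤ ∑ i ∈ s, c i := by
  obtain ⟨t, ht0, hts, htsc⟩ : ∃ t, 0 ≤ t ∧ (∀ i ∈ s, t ≤ c i) ∧ ∀ j ∉ s, c j ≤ t := by
    rcases sᶜ.eq_empty_or_nonempty with h | h
    · exact ⟨0, le_rfl, fun i _ => hc0 i, fun j hj => by simp_all [compl_eq_empty_iff]⟩
    · obtain ⟨j₀, hj₀, hmax⟩ := sᶜ.exists_max_image c h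
      exact ⟨c j₀, hc0 j₀, fun i hi => hc i hi j₀ (mem_compl.1 hj₀),
        fun j hj => hmax j (mem_compl.2 hj)⟩
  calc ∑ i, c i * τ i
      = ∑ i ∈ s, c i + (∑ i ∈ s, c i * (τ i - 1) + ∑ i ∈ sᶜ, c i * τ i) := by
        rw [← sum_add_sum_compl s]
        simp only [mul_sub, mul_one, sum_sub_distrib]
        ring
    _ ≤ ∑ i ∈ s, c i + (∑ i ∈ s, t * (τ i - 1) + ∑ i ∈ sᶜ, t * τ i) := by
        gcongr (∑ i ∈ s, c i) + (?_ + ?_)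
        · exact sum_le_sum fun i hi => by nlinarith [hts i hi, hτ1 i]
        · exact sum_le_sum fun i hi =>
            mul_le_mul_of_nonneg_right (htsc i (mem_compl.1 hi)) (hτ0 i)
    _ = ∑ i ∈ s, c i + t * (∑ i, τ i - #s) := by
        rw [← sum_add_sum_compl s τ]
        simp only [← mul_sum, sum_sub_distrib, sum_const, nsmul_eq_mul, mul_one]
        ring
    _ ≤ ∑ i ∈ s, c i := by nlinarith

section Frobenius

variable {l m n p : Type*} [Fintype l] [Fintype m] [Fintype n] [Fintype p]

lemma frobSq_eq_trace_mul_transpose (X : Matrix m n ℝ) : frobSq X = (X * Xᵀ).trace := by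
  simp [frobSq, trace, mul_apply, sq]

lemma frobSq_mul_mul_transpose_of_isometry [DecidableEq m] [DecidableEq n]
    {U : Matrix l m ℝ} {V : Matrix p n ℝ} (hU : Uᵀ * U = 1) (hV : Vᵀ * V = 1)
    (X : Matrix m n ℝ) : frobSq (U * X * Vᵀ) = frobSq X := by
  have h : U * X * Vᵀ * (U * X * Vᵀ)ᵀ = U * (X * Xᵀ) * Uᵀ := by
    simp only [transpose_mul, transpose_transpose, Matrix.mul_assoc]
    rw [← Matrix.mul_assoc Vᵀ, hV, Matrix.one_mul]
  rw [frobSq_eq_trace_mul_transpose, frobSq_eq_trace_mul_transpose, h, trace_mul_comm,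
    ← Matrix.mul_assoc, hU, Matrix.one_mul]

lemma IsStarProjection.transpose_eq {P : Matrix n n ℝ} (hP : IsStarProjection P) : Pᵀ = P := by
  rw [← conjTranspose_eq_transpose_of_trivial]; exact hP.isSelfAdjoint

variable {P : Matrix n n ℝ}

lemma frobSq_mul_eq_trace (hP : IsStarProjection P) (X : Matrix m n ℝ) :
    frobSq (X * P) = (Xᵀ * X * P).trace := by
  rw [frobSq_eq_trace_mul_transpose, transpose_mul, hP.transpose_eq, Matrix.mul_assoc X,
    ← Matrix.mul_assoc P, hP.isIdempotentElem.eq, ← Matrix.mul_assoc, trace_mul_comm,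
    Matrix.mul_assoc]

lemma frobSq_eq_frobSq_mul_add_frobSq_mul_one_sub [DecidableEq n] (hP : IsStarProjection P)
    (X : Matrix m n ℝ) : frobSq X = frobSq (X * P) + frobSq (X * (1 - P)) := by
  rw [frobSq_mul_eq_trace hP, frobSq_mul_eq_trace hP.one_sub, ← trace_add, ← Matrix.mul_add,
    add_sub_cancel, Matrix.mul_one, trace_mul_comm, frobSq_eq_trace_mul_transpose]

lemma frobSq_sub_frobSq_mul_le [DecidableEq n] (hP : IsStarProjection P) {B : Matrix m n ℝ}
    (hB : B * P = B) (X : Matrix m n ℝ) : frobSq X - frobSq (X * P) ≤ frobSq (X - B) := by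
  have hB' : (X - B) * (1 - P) = X * (1 - P) := by
    rw [Matrix.sub_mul, Matrix.mul_sub B, hB, Matrix.mul_one, sub_self, sub_zero]
  have hXB := frobSq_eq_frobSq_mul_add_frobSq_mul_one_sub hP (X - B)
  rw [hB'] at hXB
  have h0 : 0 ≤ frobSq ((X - B) * P) := by unfold frobSq; positivity
  linarith [frobSq_eq_frobSq_mul_add_frobSq_mul_one_sub hP X]

lemma IsStarProjection.diag_eq_sum_sq (hP : IsStarProjection P) (j : n) :
    P j j = ∑ i, P j i ^ 2 := by
  conv_lhs => rw [← hP.isIdempotentElem.eq]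
  refine sum_congr rfl fun i _ => ?_
  rw [sq]
  exact congrArg (P j i * ·) (congrFun (congrFun hP.transpose_eq j) i)

lemma IsStarProjection.diag_mem_Icc (hP : IsStarProjection P) (j : n) : P j j ∈ Set.Icc 0 1 := by
  have h := hP.diag_eq_sum_sq j
  have h0 : 0 ≤ P j j := h ▸ sum_nonneg fun _ _ => sq_nonneg _
  have h1 : P j j ^ 2 ≤ P j j := h ▸ single_le_sum (fun i _ => sq_nonneg (P j i)) (mem_univ j)
  exact ⟨h0, by nlinarith⟩

lemma IsStarProjection.trace_le_card (hP : IsStarProjection P) : P.trace ≤ Fintype.card n := by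
  calc P.trace = ∑ j, P j j := rfl
    _ ≤ ∑ _j : n, (1 : ℝ) := sum_le_sum fun j _ => (hP.diag_mem_Icc j).2
    _ = Fintype.card n := by simp

end Frobenius

lemma isStarProjection_diagonal_ite {n : Type*} [Fintype n] [DecidableEq n] (p : n → Prop)
    [DecidablePred p] : IsStarProjection (diagonal fun j => if p j then (1 : ℝ) else 0) := by
  refine ⟨?_, ?_⟩
  · rw [IsIdempotentElem, diagonal_mul_diagonal]
    congr 1; ext j; split_ifs <;> simp
  · exact isHermitian_diagonal _

lemma trace_diagonal_mul_le_sum {n : Type*} [Fintype n] [DecidableEq n] (s : Finset n)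
    {c : n → ℝ} (hc0 : ∀ i, 0 ≤ c i) (hc : ∀ i ∈ s, ∀ j ∉ s, c j ≤ c i)
    {P : Matrix n n ℝ} (hP : IsStarProjection P) (htr : P.trace ≤ #s) :
    (diagonal c * P).trace ≤ ∑ i ∈ s, c i := by
  simp only [trace, diag_apply, diagonal_mul]
  exact sum_mul_le_sum_of_sum_le_card s hc0 hc (fun i => (hP.diag_mem_Icc i).1)
    (fun i => (hP.diag_mem_Icc i).2) htr

lemma exists_factorization_orthonormal_rows {m n : Type*} [Fintype m] [Fintype n]
    (B : Matrix m n ℝ) :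
    ∃ (C : Matrix m (Fin B.rank) ℝ) (Q : Matrix (Fin B.rank) n ℝ), Q * Qᵀ = 1 ∧ C * Q = B := by
  classical
  let row (i : m) : EuclideanSpace ℝ n := WithLp.toLp 2 (B i)
  let W : Submodule ℝ (EuclideanSpace ℝ n) := Submodule.span ℝ (Set.range row)
  have hW : Module.finrank ℝ W = B.rank := by
    rw [rank_eq_finrank_span_row,
      ← LinearEquiv.finrank_map_eq (WithLp.linearEquiv 2 ℝ (n → ℝ)).symm, Submodule.map_span,
      ← Set.range_comp]
    rfl
  let b := (stdOrthonormalBasis ℝ W).reindex (finCongr hW)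
  have hrow (i : m) : row i ∈ W := Submodule.subset_span (Set.mem_range_self i)
  refine ⟨of fun i l => b.repr ⟨row i, hrow i⟩ l, of fun l j => (b l : EuclideanSpace ℝ n) j,
    ?_, ?_⟩
  · ext l l'
    have hbb := orthonormal_iff_ite.1 b.orthonormal l' l
    simpa [mul_apply, one_apply, Submodule.coe_inner, EuclideanSpace.inner_eq_star_dotProduct,
      dotProduct, @eq_comm _ l'] using hbb
  · ext i j
    have hB := congrArg (fun x : W => (x : EuclideanSpace ℝ n) j) (b.sum_repr ⟨row i, hrow i⟩)
    simpa [mul_apply] using hB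

lemma exists_isStarProjection_mul_eq_trace_eq_rank {m n : Type*} [Fintype m] [Fintype n]
    [DecidableEq n] (B : Matrix m n ℝ) :
    ∃ P : Matrix n n ℝ, IsStarProjection P ∧ B * P = B ∧ P.trace = B.rank := by
  obtain ⟨C, Q, hQ, hCQ⟩ := exists_factorization_orthonormal_rows B
  refine ⟨Qᵀ * Q, ⟨?_, ?_⟩, ?_, ?_⟩
  · rw [IsIdempotentElem, Matrix.mul_assoc, ← Matrix.mul_assoc Q, hQ, Matrix.one_mul]
  · rw [IsSelfAdjoint, star_eq_conjTranspose, conjTranspose_eq_transpose_of_trivial,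
      transpose_mul, transpose_transpose]
  · calc B * (Qᵀ * Q) = C * Q * (Qᵀ * Q) := congrArg (· * (Qᵀ * Q)) hCQ.symm
      _ = C * Q := by rw [Matrix.mul_assoc, ← Matrix.mul_assoc Q, hQ, Matrix.one_mul]
      _ = B := hCQ
  · rw [trace_mul_comm, hQ, trace_one, Fintype.card_fin]

section RectangularDiagonal

variable {m n : ℕ} {σ : ℕ → ℝ} {S : Matrix (Fin m) (Fin n) ℝ}

lemma transpose_mul_self_eq_diagonal (hS : ∀ i j, S i j = if (i : ℕ) = j then σ i else 0) :
    Sᵀ * S = diagonal fun j : Fin n => if (j : ℕ) < m then σ j ^ 2 else 0 := by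
  ext j j'
  simp only [mul_apply, transpose_apply, hS, diagonal_apply]
  rw [Fin.sum_univ_eq_sum_range
    (fun i => (if i = (j : ℕ) then σ i else 0) * (if i = (j' : ℕ) then σ i else 0))]
  by_cases h : j = j'
  · subst h; simp [← sq, sum_ite_eq']
  · simp [h, Ne.symm h, Fin.val_inj, ite_mul]

lemma frobSq_mul_le_frobSq_mul_diagonal (k : ℕ) (hσ0 : ∀ i, 0 ≤ σ i) (hσ : Antitone σ)
    (hS : ∀ i j, S i j = if (i : ℕ) = j then σ i else 0)
    {P : Matrix (Fin n) (Fin n) ℝ} (hP : IsStarProjection P) (htr : P.trace ≤ k) :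
    frobSq (S * P) ≤
      frobSq (S * diagonal fun j : Fin n => if (j : ℕ) < k then (1 : ℝ) else 0) := by
  set c : Fin n → ℝ := fun j => if (j : ℕ) < m then σ j ^ 2 else 0
  set s : Finset (Fin n) := {j | (j : ℕ) < k}
  have hc0 : ∀ j, 0 ≤ c j := fun j => by positivity
  have hc : ∀ i ∈ s, ∀ j ∉ s, c j ≤ c i := by
    intro i hi j hj
    simp only [s, mem_filter, mem_univ, true_and, not_lt] at hi hj
    by_cases hjm : (j : ℕ) < m
    · simp only [c, hjm, if_true, show (i : ℕ) < m by omega]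
      exact pow_le_pow_left₀ (hσ0 _) (hσ (by omega)) 2
    · simp only [c, hjm, if_false]; exact hc0 i
  have htr' : P.trace ≤ #s := by
    rw [Fin.card_filter_val_lt, Nat.cast_min]
    exact le_min (by simpa using hP.trace_le_card) htr
  rw [frobSq_mul_eq_trace hP, frobSq_mul_eq_trace (isStarProjection_diagonal_ite _),
    transpose_mul_self_eq_diagonal hS]
  simpa [c, s, trace, sum_filter] using trace_diagonal_mul_le_sum s hc0 hc hP htr'

lemma frobSq_sub_le_frobSq_sub_of_rank_le (k : ℕ) (hσ0 : ∀ i, 0 ≤ σ i) (hσ : Antitone σ)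
    (hS : ∀ i j, S i j = if (i : ℕ) = j then σ i else 0) {Sk : Matrix (Fin m) (Fin n) ℝ}
    (hSk : ∀ i j, Sk i j = if (i : ℕ) = j ∧ (i : ℕ) < k then σ i else 0)
    {B : Matrix (Fin m) (Fin n) ℝ} (hB : B.rank ≤ k) :
    frobSq (S - Sk) ≤ frobSq (S - B) := by
  set D : Matrix (Fin n) (Fin n) ℝ := diagonal fun j => if (j : ℕ) < k then 1 else 0
  have hD : IsStarProjection D := isStarProjection_diagonal_ite _
  have hSD : S - Sk = S * (1 - D) := by
    ext i j
    rw [Matrix.mul_sub, Matrix.mul_one]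
    simp only [D, Matrix.sub_apply, mul_diagonal, hS, hSk]
    split_ifs <;> simp_all
    omega
  obtain ⟨P, hP, hBP, htr⟩ := exists_isStarProjection_mul_eq_trace_eq_rank B
  have hSP := frobSq_mul_le_frobSq_mul_diagonal k hσ0 hσ hS hP (htr ▸ by exact_mod_cast hB)
  rw [hSD]
  linarith [frobSq_eq_frobSq_mul_add_frobSq_mul_one_sub hD S, frobSq_sub_frobSq_mul_le hP hBP S]

end RectangularDiagonal

theorem stmt5 {m n : ℕ} (k : ℕ) (A M : Matrix (Fin m) (Fin n) ℝ)
    (U : Matrix (Fin m) (Fin m) ℝ) (V : Matrix (Fin n) (Fin n) ℝ)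
    (σ : ℕ → ℝ) (S Sk : Matrix (Fin m) (Fin n) ℝ)
    (hU : Uᵀ * U = 1) (hU' : U * Uᵀ = 1)
    (hV : Vᵀ * V = 1) (hV' : V * Vᵀ = 1)
    (hσnn : ∀ i, 0 ≤ σ i) (hσdesc : ∀ i j, i ≤ j → σ j ≤ σ i)
    (hS : ∀ i j, S i j = if (i : ℕ) = (j : ℕ) then σ (i : ℕ) else 0)
    (hSk : ∀ i j, Sk i j =
      if (i : ℕ) = (j : ℕ) ∧ (i : ℕ) < k then σ (i : ℕ) else 0)
    (hA : A = U * S * Vᵀ) (hM : M.rank ≤ k) :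
    Real.sqrt (frobSq (A - U * Sk * Vᵀ)) ≤ Real.sqrt (frobSq (A - M)) := by
  set B := Uᵀ * M * V
  have hB : B.rank ≤ k := (rank_mul_le_left _ _).trans ((rank_mul_le_right _ _).trans hM)
  have hA_sub_M : A - M = U * (S - B) * Vᵀ := by
    simp only [hA, B, Matrix.mul_sub, Matrix.sub_mul, ← Matrix.mul_assoc, hU', Matrix.one_mul]
    rw [Matrix.mul_assoc M, hV', Matrix.mul_one]
  have hA_sub_Sk : A - U * Sk * Vᵀ = U * (S - Sk) * Vᵀ := by
    rw [hA, Matrix.mul_sub, Matrix.sub_mul]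
  apply Real.sqrt_le_sqrt
  rw [hA_sub_Sk, hA_sub_M, frobSq_mul_mul_transpose_of_isometry hU hV,
    frobSq_mul_mul_transpose_of_isometry hU hV]
  exact frobSq_sub_le_frobSq_sub_of_rank_le k hσnn hσdesc hS hSk hB
end

section
/- (Eckart–Young, spectral norm) For any m×n real matrix A and any m×n matrix M of rank at most k, ‖A − M‖₂ ≥ σ_{k+1}(A) = ‖A − A_k‖₂, where A_k is the rank-k truncated SVD of A. -/
/-!
Orthogonal factors preserve Euclidean length, so everything reduces to the rectangular diagonal
matrix `Σ`. As `rank M ≤ k`, the kernel of `M` meets the `(k + 1)`-dimensional span of the first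
`k + 1` columns of `V` nontrivially; for `x` in this intersection `(A - M) x = A x`, and
`‖A x‖ ≥ σ k ‖x‖` because `σ 0 ≥ ⋯ ≥ σ k`. On the other hand `A - A_k = U Σ' Vᵀ`, where `Σ'` keeps
only the `σ i` with `i ≥ k`; its largest entry is `σ k`, attained on the `k`-th column of `V`.
-/

open Matrix

noncomputable def specNorm {m n : ℕ} (A : Matrix (Fin m) (Fin n) ℝ) : ℝ :=
  sSup {r | ∃ x : Fin n → ℝ, (∑ j, x j ^ 2) = 1 ∧
    r = Real.sqrt (∑ i, (A.mulVec x i) ^ 2)}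

section SumSq

variable {R : Type*} [CommSemiring R] {ι κ : Type*} [Fintype ι] [Fintype κ]

lemma sum_sq_eq_dotProduct (v : ι → R) : ∑ i, v i ^ 2 = v ⬝ᵥ v := by
  simp only [dotProduct, sq]

lemma sum_sq_smul (a : R) (v : ι → R) : ∑ i, (a • v) i ^ 2 = a ^ 2 * ∑ i, v i ^ 2 := by
  simp only [Pi.smul_apply, smul_eq_mul, mul_pow, Finset.mul_sum]

lemma sum_sq_mulVec_of_transpose_mul_self [DecidableEq κ] {U : Matrix ι κ R} (hU : Uᵀ * U = 1)
    (v : κ → R) : ∑ i, (U *ᵥ v) i ^ 2 = ∑ j, v j ^ 2 := by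
  rw [sum_sq_eq_dotProduct, sum_sq_eq_dotProduct, dotProduct_mulVec, ← mulVec_transpose,
    mulVec_mulVec, hU, one_mulVec]

lemma sum_sq_mulVec_of_subsingleton_row_support {D : Matrix ι κ R}
    (hD : ∀ i, {j | D i j ≠ 0}.Subsingleton) (y : κ → R) :
    ∑ i, (D *ᵥ y) i ^ 2 = ∑ j, (∑ i, D i j ^ 2) * y j ^ 2 := by
  have hrow : ∀ i, (D *ᵥ y) i ^ 2 = ∑ j, D i j ^ 2 * y j ^ 2 := by
    intro i
    by_cases h : ∃ j, D i j ≠ 0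
    · obtain ⟨j, hj⟩ := h
      have hzero : ∀ j' ≠ j, D i j' = 0 := fun j' hj' => by_contra fun h' => hj' (hD i h' hj)
      rw [mulVec, dotProduct, Finset.sum_eq_single j (fun j' _ hj' => by simp [hzero j' hj'])
        (by simp), Finset.sum_eq_single j (fun j' _ hj' => by simp [hzero j' hj']) (by simp),
        mul_pow]
    · push Not at h
      simp [mulVec, dotProduct, h]
  simp only [hrow, Finset.sum_mul]
  exact Finset.sum_comm

end SumSq

lemma Matrix.exists_ne_zero_mulVec_eq_zero_of_rank_lt {K : Type*} [Field K] {ι κ : Type*}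
    [Fintype κ] (B : Matrix ι κ K) (h : B.rank < Fintype.card κ) :
    ∃ z, z ≠ 0 ∧ B *ᵥ z = 0 := by
  have hrk := LinearMap.finrank_range_add_finrank_ker B.mulVecLin
  rw [Module.finrank_fintype_fun_eq_card] at hrk
  have hpos : 0 < Module.finrank K (LinearMap.ker B.mulVecLin) := by
    rw [Matrix.rank] at h; omega
  obtain ⟨⟨z, hz⟩, hz0⟩ := Module.finrank_pos_iff_exists_ne_zero.1 hpos
  exact ⟨z, by simpa using hz0, hz⟩

def rectDiagonal {R : Type*} [Zero R] (m n : ℕ) (c : ℕ → R) : Matrix (Fin m) (Fin n) R :=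
  of fun i j => if (i : ℕ) = j then c i else 0

lemma sum_sq_mulVec_rectDiagonal {R : Type*} [CommSemiring R] {m n : ℕ} (c : ℕ → R)
    (y : Fin n → R) :
    ∑ i, (rectDiagonal m n c *ᵥ y) i ^ 2 =
      ∑ j : Fin n, (if (j : ℕ) < m then c j ^ 2 else 0) * y j ^ 2 := by
  rw [sum_sq_mulVec_of_subsingleton_row_support]
  · congr! 2 with j
    simp only [rectDiagonal, of_apply, ite_pow, ne_eq, OfNat.ofNat_ne_zero, not_false_eq_true,
      zero_pow]
    split_ifs with hj
    · rw [Fintype.sum_eq_single ⟨j, hj⟩ fun i hi => if_neg fun h => hi (Fin.ext h), if_pos rfl]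
    · exact Finset.sum_eq_zero fun i _ => if_neg (by omega)
  · intro i j hj j' hj'
    simp only [rectDiagonal, of_apply, Set.mem_ofPred_eq, ne_eq, ite_eq_right_iff,
      not_forall] at hj hj'
    exact Fin.ext (hj.1.symm.trans hj'.1)

lemma bddAbove_specNorm_set {m n : ℕ} (B : Matrix (Fin m) (Fin n) ℝ) :
    BddAbove {r | ∃ x : Fin n → ℝ, (∑ j, x j ^ 2) = 1 ∧
      r = Real.sqrt (∑ i, (B.mulVec x i) ^ 2)} := by
  refine ⟨Real.sqrt (∑ i, ∑ j, B i j ^ 2), ?_⟩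
  rintro r ⟨x, hx, rfl⟩
  refine Real.sqrt_le_sqrt (Finset.sum_le_sum fun i _ => ?_)
  calc (B *ᵥ x) i ^ 2 ≤ (∑ j, B i j ^ 2) * ∑ j, x j ^ 2 :=
        Finset.sum_mul_sq_le_sq_mul_sq Finset.univ (B i) x
    _ = ∑ j, B i j ^ 2 := by rw [hx, mul_one]

lemma specNorm_le {m n : ℕ} {A : Matrix (Fin m) (Fin n) ℝ} {c : ℝ} (hc : 0 ≤ c)
    (h : ∀ x, ∑ i, (A *ᵥ x) i ^ 2 ≤ c ^ 2 * ∑ j, x j ^ 2) : specNorm A ≤ c := by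
  refine Real.sSup_le ?_ hc
  rintro r ⟨x, hx, rfl⟩
  rw [← Real.sqrt_sq hc]
  exact Real.sqrt_le_sqrt (by simpa [hx] using h x)

lemma le_specNorm {m n : ℕ} {A : Matrix (Fin m) (Fin n) ℝ} {c : ℝ} (hc : 0 ≤ c) {x : Fin n → ℝ}
    (hx : x ≠ 0) (h : c ^ 2 * ∑ j, x j ^ 2 ≤ ∑ i, (A *ᵥ x) i ^ 2) : c ≤ specNorm A := by
  set s := ∑ j, x j ^ 2
  have hs : 0 < s := by
    obtain ⟨j, hj⟩ := Function.ne_iff.1 hx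
    exact Finset.sum_pos' (fun j _ => sq_nonneg _) ⟨j, Finset.mem_univ _, sq_pos_of_ne_zero hj⟩
  have hunit : ∑ j, ((√s)⁻¹ • x) j ^ 2 = 1 := by
    rw [sum_sq_smul, inv_pow, Real.sq_sqrt hs.le, inv_mul_cancel₀ hs.ne']
  calc c = √(c ^ 2) := (Real.sqrt_sq hc).symm
    _ ≤ √(∑ i, (A *ᵥ ((√s)⁻¹ • x)) i ^ 2) := by
      rw [mulVec_smul, sum_sq_smul, inv_pow, Real.sq_sqrt hs.le]
      exact Real.sqrt_le_sqrt ((le_inv_mul_iff₀ hs).2 (by rwa [mul_comm]))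
    _ ≤ specNorm A := le_csSup (bddAbove_specNorm_set A) ⟨_, hunit, rfl⟩

lemma le_specNorm_sub_of_rank_le {m n k : ℕ} {U : Matrix (Fin m) (Fin m) ℝ}
    {V : Matrix (Fin n) (Fin n) ℝ} {σ : ℕ → ℝ} (hU : Uᵀ * U = 1) (hV : Vᵀ * V = 1)
    (hkm : k < m) (hkn : k < n) (hσk : 0 ≤ σ k) (hσ : ∀ j ≤ k, σ k ≤ σ j)
    {M : Matrix (Fin m) (Fin n) ℝ} (hM : M.rank ≤ k) :
    σ k ≤ specNorm (U * rectDiagonal m n σ * Vᵀ - M) := by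
  set e : Fin (k + 1) → Fin n := Fin.castLE hkn
  set P := V.submatrix id e
  have hP : Pᵀ * P = 1 := by
    rw [transpose_submatrix, ← submatrix_mul _ _ _ _ _ Function.bijective_id, hV]
    exact submatrix_one e (Fin.castLE_injective hkn)
  have hVP : Vᵀ * P = (1 : Matrix (Fin n) (Fin n) ℝ).submatrix id e := by rw [← hV]; rfl
  have hDP : rectDiagonal m n σ * Vᵀ * P = rectDiagonal m (k + 1) σ := by
    rw [Matrix.mul_assoc, hVP, ← Equiv.coe_refl, mul_submatrix_one]
    ext i j
    simp [rectDiagonal, e]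
  obtain ⟨z, hz, hMz⟩ := (M * P).exists_ne_zero_mulVec_eq_zero_of_rank_lt
    (by simpa using (rank_mul_le_left M P).trans_lt (Nat.lt_succ_of_le hM))
  have hMPz : M *ᵥ (P *ᵥ z) = 0 := by rwa [mulVec_mulVec]
  refine le_specNorm hσk (x := P *ᵥ z) ?_ ?_
  · intro h
    apply hz
    simpa [mulVec_mulVec, hP] using congrArg (Pᵀ *ᵥ ·) h
  calc σ k ^ 2 * ∑ j, (P *ᵥ z) j ^ 2 = ∑ j, σ k ^ 2 * z j ^ 2 := by
        rw [sum_sq_mulVec_of_transpose_mul_self hP, Finset.mul_sum]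
    _ ≤ ∑ j : Fin (k + 1), (if (j : ℕ) < m then σ j ^ 2 else 0) * z j ^ 2 := by
        gcongr with j
        rw [if_pos (by omega)]
        exact pow_le_pow_left₀ hσk (hσ j (by omega)) 2
    _ = ∑ i, ((U * rectDiagonal m n σ * Vᵀ - M) *ᵥ (P *ᵥ z)) i ^ 2 := by
        rw [sub_mulVec, hMPz, sub_zero, mulVec_mulVec, Matrix.mul_assoc,
          Matrix.mul_assoc, ← Matrix.mul_assoc _ Vᵀ, hDP, ← mulVec_mulVec,
          sum_sq_mulVec_of_transpose_mul_self hU, sum_sq_mulVec_rectDiagonal]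

lemma specNorm_mul_rectDiagonal_mul_transpose {m n j : ℕ} {U : Matrix (Fin m) (Fin m) ℝ}
    {V : Matrix (Fin n) (Fin n) ℝ} {c : ℕ → ℝ} (hU : Uᵀ * U = 1) (hV : Vᵀ * V = 1)
    (hV' : V * Vᵀ = 1) (hjm : j < m) (hjn : j < n) (hcj : 0 ≤ c j)
    (hc : ∀ i < m, c i ^ 2 ≤ c j ^ 2) :
    specNorm (U * rectDiagonal m n c * Vᵀ) = c j := by
  have hmul : ∀ x, ∑ i, ((U * rectDiagonal m n c * Vᵀ) *ᵥ x) i ^ 2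
      = ∑ i, (rectDiagonal m n c *ᵥ (Vᵀ *ᵥ x)) i ^ 2 := fun x => by
    rw [← mulVec_mulVec, ← mulVec_mulVec, sum_sq_mulVec_of_transpose_mul_self hU]
  set ej : Fin n → ℝ := Pi.single ⟨j, hjn⟩ 1
  have hVej : Vᵀ *ᵥ (V *ᵥ ej) = ej := by rw [mulVec_mulVec, hV, one_mulVec]
  refine le_antisymm (specNorm_le hcj fun x => ?_) (le_specNorm hcj (x := V *ᵥ ej) ?_ ?_)
  · rw [hmul, sum_sq_mulVec_rectDiagonal,
      ← sum_sq_mulVec_of_transpose_mul_self (U := Vᵀ) (by rwa [transpose_transpose]) x,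
      Finset.mul_sum]
    gcongr with i
    split_ifs with hi
    · exact hc i hi
    · positivity
  · intro h
    simpa [h, ej] using congrFun hVej ⟨j, hjn⟩
  · rw [hmul, hVej, sum_sq_mulVec_rectDiagonal, sum_sq_mulVec_of_transpose_mul_self hV]
    simp [ej, Pi.single_apply, hjm]

theorem stmt6_general {m n : ℕ} (k : ℕ) (A M : Matrix (Fin m) (Fin n) ℝ)
    (U : Matrix (Fin m) (Fin m) ℝ) (V : Matrix (Fin n) (Fin n) ℝ)
    (σ : ℕ → ℝ) (S Sk : Matrix (Fin m) (Fin n) ℝ)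
    (hU : Uᵀ * U = 1)
    (hV : Vᵀ * V = 1) (hV' : V * Vᵀ = 1)
    (hσnn : ∀ i, 0 ≤ σ i) (hσdesc : ∀ i j, i ≤ j → σ j ≤ σ i)
    (hS : ∀ i j, S i j = if (i : ℕ) = (j : ℕ) then σ (i : ℕ) else 0)
    (hSk : ∀ i j, Sk i j =
      if (i : ℕ) = (j : ℕ) ∧ (i : ℕ) < k then σ (i : ℕ) else 0)
    (hA : A = U * S * Vᵀ) (hk : k < min m n) (hM : M.rank ≤ k) :
    σ k ≤ specNorm (A - M) ∧ specNorm (A - U * Sk * Vᵀ) = σ k := by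
  obtain ⟨hkm, hkn⟩ := lt_min_iff.1 hk
  have hS' : S = rectDiagonal m n σ := Matrix.ext hS
  have hSk' : S - Sk = rectDiagonal m n fun t => if t < k then 0 else σ t := by
    ext i j
    simp only [Matrix.sub_apply, hS, hSk, rectDiagonal, of_apply]
    split_ifs <;> grind
  refine ⟨?_, ?_⟩
  · rw [hA, hS']
    exact le_specNorm_sub_of_rank_le hU hV hkm hkn (hσnn k) (fun j hj => hσdesc j k hj) hM
  · rw [hA, ← Matrix.sub_mul, ← Matrix.mul_sub, hSk',
      specNorm_mul_rectDiagonal_mul_transpose hU hV hV' hkm hkn (by simpa using hσnn k)]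
    · simp
    · intro i _
      simp only [lt_self_iff_false, if_false]
      split_ifs with hi
      · simpa using sq_nonneg (σ k)
      · exact pow_le_pow_left₀ (hσnn i) (hσdesc k i (by omega)) 2

theorem stmt6 {m n : ℕ} (k : ℕ) (A M : Matrix (Fin m) (Fin n) ℝ)
    (U : Matrix (Fin m) (Fin m) ℝ) (V : Matrix (Fin n) (Fin n) ℝ)
    (σ : ℕ → ℝ) (S Sk : Matrix (Fin m) (Fin n) ℝ)
    (hU : Uᵀ * U = 1) (hU' : U * Uᵀ = 1)
    (hV : Vᵀ * V = 1) (hV' : V * Vᵀ = 1)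
    (hσnn : ∀ i, 0 ≤ σ i) (hσdesc : ∀ i j, i ≤ j → σ j ≤ σ i)
    (hS : ∀ i j, S i j = if (i : ℕ) = (j : ℕ) then σ (i : ℕ) else 0)
    (hSk : ∀ i j, Sk i j =
      if (i : ℕ) = (j : ℕ) ∧ (i : ℕ) < k then σ (i : ℕ) else 0)
    (hA : A = U * S * Vᵀ) (hk : k < min m n) (hM : M.rank ≤ k) :
    σ k ≤ specNorm (A - M) ∧ specNorm (A - U * Sk * Vᵀ) = σ k :=
  stmt6_general k A M U V σ S Sk hU hV hV' hσnn hσdesc hS hSk hA hk hM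
end
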